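/- (Bottleneck bound for reversible chains) Let P be an irreducible Markov chain on a finite set Ω reversible with respect to π, and let A ⊆ Ω with π(A) ≤ 1/2. Then the bottleneck ratio Φ(A) := Q(A, Aᶜ)/π(A), where Q(x,y) = π(x)P(x,y), satisfies: the spectral gap of P is at most 2Φ(A), hence the relaxation time t_rel = 1/gap ≥ 1/(2Φ(A)). -/
import Mathlib


variable {n : ℕ}

/-- Dirichlet form `E(f) = ½ ∑_{x,y} π(x) P(x,y) (f(x) - f(y))²`. -/
noncomputable def dirichletForm (π : Fin n → ℝ) (P : Matrix (Fin n) (Fin n) ℝ)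
    (f : Fin n → ℝ) : ℝ :=
  (1/2) * ∑ x, ∑ y, π x * P x y * (f x - f y) ^ 2

/-- Variance of `f` under `π`. -/
noncomputable def varPi (π : Fin n → ℝ) (f : Fin n → ℝ) : ℝ :=
  ∑ x, π x * (f x - ∑ y, π y * f y) ^ 2

/-- The spectral gap `1 - λ₂` of a reversible chain, via the variational
characterization `gap = inf { E(f)/Var(f) : Var(f) ≠ 0 }`. -/
noncomputable def spectralGap (π : Fin n → ℝ) (P : Matrix (Fin n) (Fin n) ℝ) : ℝ :=
  sInf {r : ℝ | ∃ f : Fin n → ℝ, varPi π f ≠ 0 ∧ r = dirichletForm π P f / varPi π f}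

/-- Edge measure `Q(A, Aᶜ) = ∑_{x ∈ A, y ∉ A} π(x) P(x,y)`. -/
noncomputable def edgeMeasure (π : Fin n → ℝ) (P : Matrix (Fin n) (Fin n) ℝ)
    (A : Finset (Fin n)) : ℝ :=
  ∑ x ∈ A, ∑ y ∈ Aᶜ, π x * P x y

theorem stmt8 (hn : 1 ≤ n) (π : Fin n → ℝ) (P : Matrix (Fin n) (Fin n) ℝ)
    (hπpos : ∀ x, 0 < π x) (hπsum : ∑ x, π x = 1)
    (hPnonneg : ∀ x y, 0 ≤ P x y) (hPstoch : ∀ x, ∑ y, P x y = 1)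
    (hrev : ∀ x y, π x * P x y = π y * P y x)
    (A : Finset (Fin n)) (hAne : A.Nonempty) (hA : ∑ x ∈ A, π x ≤ 1/2) :
    spectralGap π P ≤ 2 * (edgeMeasure π P A / ∑ x ∈ A, π x) ∧
    (0 < spectralGap π P →
      1 / (2 * (edgeMeasure π P A / ∑ x ∈ A, π x)) ≤ 1 / spectralGap π P) := by
  set m : ℝ := ∑ x ∈ A, π x with hm
  have hm0 : 0 < m := Finset.sum_pos (fun x _ => hπpos x) hAne
  have hmc : ∑ x ∈ Aᶜ, π x = 1 - m := by
    have := Finset.sum_add_sum_compl A π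
    linarith [this.trans hπsum]
  set f : Fin n → ℝ := fun x => if x ∈ A then 1 else 0 with hf
  have hmean : ∑ y, π y * f y = m := by
    simp only [hf, mul_ite, mul_one, mul_zero]
    rw [Finset.sum_ite_mem, Finset.univ_inter]
  have hQ0 : 0 ≤ edgeMeasure π P A :=
    Finset.sum_nonneg fun x _ => Finset.sum_nonneg fun y _ =>
      mul_nonneg (hπpos x).le (hPnonneg x y)
  have hvar : varPi π f = m * (1 - m) := by
    unfold varPi
    rw [hmean, ← Finset.sum_add_sum_compl A (fun x => π x * (f x - m) ^ 2)]
    have h1 : ∀ x ∈ A, π x * (f x - m) ^ 2 = π x * (1 - m) ^ 2 := by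
      intro x hx; simp [hf, hx]
    have h2 : ∀ x ∈ Aᶜ, π x * (f x - m) ^ 2 = π x * m ^ 2 := by
      intro x hx; simp only [Finset.mem_compl] at hx
      simp [hf, hx]
    rw [Finset.sum_congr rfl h1, Finset.sum_congr rfl h2, ← Finset.sum_mul,
      ← Finset.sum_mul, hmc, ← hm]
    ring
  have hvarne : varPi π f ≠ 0 := by
    rw [hvar]
    have : 0 < 1 - m := by linarith
    positivity
  have hdir : dirichletForm π P f = edgeMeasure π P A := by
    unfold dirichletForm
    have hsplit : ∀ x : Fin n, ∑ y, π x * P x y * (f x - f y) ^ 2 =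
        ∑ y ∈ A, π x * P x y * (f x - f y) ^ 2 +
        ∑ y ∈ Aᶜ, π x * P x y * (f x - f y) ^ 2 := fun x =>
      (Finset.sum_add_sum_compl A _).symm
    rw [Finset.sum_congr rfl (fun x _ => hsplit x), Finset.sum_add_distrib,
      ← Finset.sum_add_sum_compl A (fun x => ∑ y ∈ A, π x * P x y * (f x - f y) ^ 2),
      ← Finset.sum_add_sum_compl A (fun x => ∑ y ∈ Aᶜ, π x * P x y * (f x - f y) ^ 2)]
    have hAA : ∑ x ∈ A, ∑ y ∈ A, π x * P x y * (f x - f y) ^ 2 = 0 := by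
      apply Finset.sum_eq_zero; intro x hx
      apply Finset.sum_eq_zero; intro y hy
      simp [hf, hx, hy]
    have hCC : ∑ x ∈ Aᶜ, ∑ y ∈ Aᶜ, π x * P x y * (f x - f y) ^ 2 = 0 := by
      apply Finset.sum_eq_zero; intro x hx
      apply Finset.sum_eq_zero; intro y hy
      simp only [Finset.mem_compl] at hx hy
      simp [hf, hx, hy]
    have hAC : ∑ x ∈ A, ∑ y ∈ Aᶜ, π x * P x y * (f x - f y) ^ 2 = edgeMeasure π P A := by
      unfold edgeMeasure
      apply Finset.sum_congr rfl; intro x hx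
      apply Finset.sum_congr rfl; intro y hy
      simp only [Finset.mem_compl] at hy
      simp [hf, hx, hy]
    have hCA : ∑ x ∈ Aᶜ, ∑ y ∈ A, π x * P x y * (f x - f y) ^ 2 = edgeMeasure π P A := by
      rw [Finset.sum_comm]
      unfold edgeMeasure
      apply Finset.sum_congr rfl; intro x hx
      apply Finset.sum_congr rfl; intro y hy
      simp only [Finset.mem_compl] at hy
      rw [hrev y x]
      simp [hf, hx, hy]
    rw [hAA, hCC, hAC, hCA]
    ring
  have hratio : dirichletForm π P f / varPi π f ≤ 2 * (edgeMeasure π P A / m) := by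
    rw [hdir, hvar]
    have h2 : 2 * (edgeMeasure π P A / m) = edgeMeasure π P A / (m / 2) := by
      field_simp
    rw [h2]
    apply div_le_div_of_nonneg_left hQ0 (by linarith)
    nlinarith
  have hbdd : BddBelow {r : ℝ | ∃ g : Fin n → ℝ, varPi π g ≠ 0 ∧
      r = dirichletForm π P g / varPi π g} := by
    refine ⟨0, fun r hr => ?_⟩
    obtain ⟨g, _, rfl⟩ := hr
    apply div_nonneg
    · unfold dirichletForm
      apply mul_nonneg (by norm_num)
      apply Finset.sum_nonneg; intro x _
      apply Finset.sum_nonneg; intro y _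
      have := hπpos x
      have := hPnonneg x y
      positivity
    · unfold varPi
      apply Finset.sum_nonneg; intro x _
      have := hπpos x
      positivity
  have hmem : dirichletForm π P f / varPi π f ∈ {r : ℝ | ∃ g : Fin n → ℝ,
      varPi π g ≠ 0 ∧ r = dirichletForm π P g / varPi π g} := ⟨f, hvarne, rfl⟩
  have h1 : spectralGap π P ≤ 2 * (edgeMeasure π P A / m) :=
    le_trans (csInf_le hbdd hmem) hratio
  refine ⟨h1, fun hgap => one_div_le_one_div_of_le hgap h1⟩
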